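/- arXiv:1212.2566 — 3 statements merged into one kernel-verified Lean document; each statement's English description precedes it below -/
import Mathlib

section
/- Let m ≥ 1 be an integer. There exists a constant C = C(m) such that for every measurable f : (0,∞) → ℂ in L²((0,∞), r dr), the function g(r) := r^{−m} ∫_0^r f(s) s^m ds is (weakly) differentiable and satisfies ‖g'‖_{L²(r dr)} + ‖g/r‖_{L²(r dr)} ≤ C ‖f‖_{L²(r dr)}; that is, the operator r^{−m}[r^{−m}∂̄_r]^{-1} maps L²((0,∞), r dr) boundedly into Ḣ¹_e. -/
open MeasureTheory Set Filter
open scoped ENNReal Topology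

noncomputable section


lemma aux_CS (μ : Measure ℝ) (φ ψ : ℝ → ℝ≥0∞) (hφ : AEMeasurable φ μ) (hψ : AEMeasurable ψ μ) :
    ∫⁻ a, φ a * ψ a ∂μ
      ≤ (∫⁻ a, (φ a)^(2:ℝ) ∂μ)^(2⁻¹:ℝ) * (∫⁻ a, (ψ a)^(2:ℝ) ∂μ)^(2⁻¹:ℝ) := by
  have := ENNReal.lintegral_mul_le_Lp_mul_Lq μ Real.HolderConjugate.two_two hφ hψ
  simpa [one_div] using this

lemma prefactor_identity (m : ℕ) (x : ℝ≥0∞) (hx0 : x ≠ 0) (hxt : x ≠ ⊤) (b : ℝ≥0∞) :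
    x * (((x^m)^(2⁻¹:ℝ) * b^(2⁻¹:ℝ)) / x^(m+1))^(2:ℝ) = (x^(m+1))⁻¹ * b := by
  have e1 : (((x^m)^(2⁻¹:ℝ) * b^(2⁻¹:ℝ)) / x^(m+1))^(2:ℝ)
      = x^m * b * ((x^(m+1))^(2:ℝ))⁻¹ := by
    rw [div_eq_mul_inv, ENNReal.mul_rpow_of_nonneg _ _ (by norm_num : (0:ℝ) ≤ 2),
      ENNReal.mul_rpow_of_nonneg _ _ (by norm_num : (0:ℝ) ≤ 2),
      ENNReal.rpow_inv_rpow (by norm_num : (2:ℝ) ≠ 0),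
      ENNReal.rpow_inv_rpow (by norm_num : (2:ℝ) ≠ 0),
      ENNReal.inv_rpow]
  rw [e1]
  have e2 : (x^(m+1))^(2:ℝ) = x^(m+1) * x^(m+1) := by
    rw [show (2:ℝ) = ((2:ℕ):ℝ) by norm_num, ENNReal.rpow_natCast, pow_two]
  have hp0 : x^(m+1) ≠ 0 := pow_ne_zero _ hx0
  have hpt : x^(m+1) ≠ ⊤ := ENNReal.pow_ne_top hxt
  rw [e2, ENNReal.mul_inv (Or.inl hp0) (Or.inl hpt)]
  calc x * (x^m * b * ((x^(m+1))⁻¹ * (x^(m+1))⁻¹))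
      = (x * x^m) * (x^(m+1))⁻¹ * ((x^(m+1))⁻¹ * b) := by ring
    _ = (x^(m+1) * (x^(m+1))⁻¹) * ((x^(m+1))⁻¹ * b) := by rw [← pow_succ']
    _ = (x^(m+1))⁻¹ * b := by rw [ENNReal.mul_inv_cancel hp0 hpt, one_mul]

lemma hardy_core (m : ℕ) (hm : 1 ≤ m) (u : ℝ → ℝ≥0∞) (hu : Measurable u)
    (hufin : ∀ s, u s ≠ ⊤) :
    ∫⁻ r in Set.Ioi (0:ℝ), ENNReal.ofReal r *
      ((∫⁻ s in Set.Ioc (0:ℝ) r, (ENNReal.ofReal s)^m * u s) / (ENNReal.ofReal r)^(m+1))^(2:ℝ)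
    ≤ ENNReal.ofReal (1/(m:ℝ)) * ∫⁻ s in Set.Ioi (0:ℝ), ENNReal.ofReal s * (u s)^(2:ℝ) := by
  have hm0 : (0:ℝ) < m := by exact_mod_cast hm
  set ψ2 : ℝ → ℝ≥0∞ := fun s => (ENNReal.ofReal s)^(m+1) * (u s)^(2:ℝ) with hψ2def
  have hψ2meas : Measurable ψ2 :=
    ((ENNReal.measurable_ofReal.comp measurable_id).pow_const _).mul (hu.pow_const _)
  have hψ2fin : ∀ s, ψ2 s ≠ ⊤ := fun s =>
    ENNReal.mul_ne_top (ENNReal.pow_ne_top ENNReal.ofReal_ne_top)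
      (ENNReal.rpow_ne_top_of_nonneg (by norm_num) (hufin s))
  set Φ : ℝ → ℝ≥0∞ := fun r => ∫⁻ s in Set.Ioc (0:ℝ) r, ψ2 s with hΦdef
  set D : ℝ → ℝ≥0∞ := fun r => (ENNReal.ofReal r)^(m+1) with hDdef
  have hDmeas : Measurable D := (ENNReal.measurable_ofReal.comp measurable_id).pow_const _
  have hΦmono : Monotone Φ := fun a b hab => lintegral_mono_set (Ioc_subset_Ioc_right hab)
  have hΦmeas : Measurable Φ := hΦmono.measurable
  -- Cauchy-Schwarz step
  have hCS : ∀ r : ℝ, 0 < r → (∫⁻ s in Set.Ioc (0:ℝ) r, (ENNReal.ofReal s)^m * u s)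
      ≤ ((ENNReal.ofReal r)^m)^(2⁻¹:ℝ) * (Φ r)^(2⁻¹:ℝ) := by
    intro r hr
    have hpt : ∀ s : ℝ, (ENNReal.ofReal s)^m * u s
        = ((ENNReal.ofReal s)^(m-1))^(2⁻¹:ℝ) * (ψ2 s)^(2⁻¹:ℝ) := by
      intro s
      set x := ENNReal.ofReal s
      rw [hψ2def, ← ENNReal.mul_rpow_of_nonneg _ _ (by norm_num : (0:ℝ) ≤ 2⁻¹), ← mul_assoc,
        ← pow_add]
      have h2m : m - 1 + (m + 1) = m * 2 := by omega
      rw [h2m, pow_mul, ← ENNReal.rpow_natCast (x^m) 2]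
      push_cast
      rw [← ENNReal.mul_rpow_of_nonneg _ _ (by norm_num : (0:ℝ) ≤ 2),
        ENNReal.rpow_rpow_inv (by norm_num)]
    have key := aux_CS (volume.restrict (Set.Ioc (0:ℝ) r))
      (fun s => ((ENNReal.ofReal s)^(m-1))^(2⁻¹:ℝ)) (fun s => (ψ2 s)^(2⁻¹:ℝ))
      (((ENNReal.measurable_ofReal.comp measurable_id).pow_const _).pow_const _).aemeasurable
      (hψ2meas.pow_const _).aemeasurable
    rw [lintegral_congr (fun s => (hpt s).symm)] at key
    have e1 : (∫⁻ s in Set.Ioc (0:ℝ) r, (((ENNReal.ofReal s)^(m-1))^(2⁻¹:ℝ))^(2:ℝ))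
        = ∫⁻ s in Set.Ioc (0:ℝ) r, (ENNReal.ofReal s)^(m-1) :=
      lintegral_congr fun s => ENNReal.rpow_inv_rpow (by norm_num) _
    have e2 : (∫⁻ s in Set.Ioc (0:ℝ) r, ((ψ2 s)^(2⁻¹:ℝ))^(2:ℝ))
        = Φ r :=
      lintegral_congr fun s => ENNReal.rpow_inv_rpow (by norm_num) _
    rw [e1, e2] at key
    refine key.trans (mul_le_mul' (ENNReal.rpow_le_rpow ?_ (by norm_num)) le_rfl)
    calc (∫⁻ s in Set.Ioc (0:ℝ) r, (ENNReal.ofReal s)^(m-1))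
        ≤ ∫⁻ _s in Set.Ioc (0:ℝ) r, (ENNReal.ofReal r)^(m-1) :=
          setLIntegral_mono measurable_const
            (fun s hs => pow_le_pow_left₀ zero_le (ENNReal.ofReal_le_ofReal hs.2) _)
      _ = (ENNReal.ofReal r)^(m-1) * ENNReal.ofReal r := by
          rw [setLIntegral_const, Real.volume_Ioc, sub_zero]
      _ = (ENNReal.ofReal r)^m := by rw [← pow_succ, Nat.sub_add_cancel hm]
  -- pointwise bound
  have hpoint : ∀ r ∈ Set.Ioi (0:ℝ), ENNReal.ofReal r *
      ((∫⁻ s in Set.Ioc (0:ℝ) r, (ENNReal.ofReal s)^m * u s) / (ENNReal.ofReal r)^(m+1))^(2:ℝ)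
      ≤ (D r)⁻¹ * Φ r := by
    intro r hr
    have hx0 : ENNReal.ofReal r ≠ 0 := (ENNReal.ofReal_pos.2 hr).ne'
    calc ENNReal.ofReal r *
        ((∫⁻ s in Set.Ioc (0:ℝ) r, (ENNReal.ofReal s)^m * u s) / (ENNReal.ofReal r)^(m+1))^(2:ℝ)
        ≤ ENNReal.ofReal r *
          ((((ENNReal.ofReal r)^m)^(2⁻¹:ℝ) * (Φ r)^(2⁻¹:ℝ)) / (ENNReal.ofReal r)^(m+1))^(2:ℝ) :=
          mul_le_mul_right (ENNReal.rpow_le_rpow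
            (ENNReal.div_le_div_right (hCS r hr) _) (by norm_num)) _
      _ = (D r)⁻¹ * Φ r := prefactor_identity m _ hx0 ENNReal.ofReal_ne_top _
  refine (setLIntegral_mono ((hDmeas.inv).mul hΦmeas) hpoint).trans ?_
  -- Tonelli
  set K : ℝ → ℝ → ℝ≥0∞ := fun r s => if 0 < s ∧ s ≤ r then (D r)⁻¹ * ψ2 s else 0 with hKdef
  have hKmeas : Measurable (Function.uncurry K) := by
    apply Measurable.ite
    · exact (measurableSet_lt measurable_const measurable_snd).inter
        (measurableSet_le measurable_snd measurable_fst)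
    · exact ((hDmeas.comp measurable_fst).inv).mul (hψ2meas.comp measurable_snd)
    · exact measurable_const
  have hK1 : ∀ r : ℝ, 0 < r → ∫⁻ s, K r s = (D r)⁻¹ * Φ r := by
    intro r hr
    have : K r = (Set.Ioc (0:ℝ) r).indicator (fun s => (D r)⁻¹ * ψ2 s) := by
      funext s
      rw [Set.indicator_apply]
      simp only [Set.mem_Ioc, hKdef]
    rw [this, lintegral_indicator measurableSet_Ioc,
      lintegral_const_mul' _ _ (ENNReal.inv_ne_top.2 (pow_ne_zero _ (ENNReal.ofReal_pos.2 hr).ne'))]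
  have hK1' : ∀ r : ℝ, r ∉ Set.Ioi (0:ℝ) → ∫⁻ s, K r s = 0 := by
    intro r hr
    have : ∀ s, K r s = 0 := by
      intro s
      apply if_neg
      rintro ⟨h1, h2⟩
      exact hr (lt_of_lt_of_le h1 h2)
    simp [this]
  have hK2 : ∀ s : ℝ, 0 < s →
      ∫⁻ r, K r s = ψ2 s * ∫⁻ t in Set.Ici s, (D t)⁻¹ := by
    intro s hs
    have : (fun r => K r s) = (Set.Ici s).indicator (fun r => (D r)⁻¹ * ψ2 s) := by
      funext r
      by_cases h : s ≤ r
      · simp [hKdef, Set.indicator_apply, h, hs]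
      · simp [hKdef, Set.indicator_apply, h]
    rw [this, lintegral_indicator measurableSet_Ici,
      lintegral_mul_const' _ _ (hψ2fin s), mul_comm]
  have hK2' : ∀ s : ℝ, s ∉ Set.Ioi (0:ℝ) → ∫⁻ r, K r s = 0 := by
    intro s hs
    have : ∀ r, K r s = 0 := fun r => if_neg (fun hc => hs hc.1)
    simp [this]
  have hswap : ∫⁻ r in Set.Ioi (0:ℝ), (D r)⁻¹ * Φ r
      = ∫⁻ s in Set.Ioi (0:ℝ), ψ2 s * ∫⁻ t in Set.Ici s, (D t)⁻¹ := by
    have step1 : ∫⁻ r in Set.Ioi (0:ℝ), (D r)⁻¹ * Φ r = ∫⁻ r, ∫⁻ s, K r s := by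
      rw [← lintegral_indicator measurableSet_Ioi]
      apply lintegral_congr
      intro r
      rw [Set.indicator_apply]
      by_cases hr : r ∈ Set.Ioi (0:ℝ)
      · rw [if_pos hr, hK1 r hr]
      · rw [if_neg hr, hK1' r hr]
    have step2 : ∫⁻ s, ∫⁻ r, K r s
        = ∫⁻ s in Set.Ioi (0:ℝ), ψ2 s * ∫⁻ t in Set.Ici s, (D t)⁻¹ := by
      rw [← lintegral_indicator measurableSet_Ioi]
      apply lintegral_congr
      intro s
      rw [Set.indicator_apply]
      by_cases hs : s ∈ Set.Ioi (0:ℝ)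
      · rw [if_pos hs, hK2 s hs]
      · rw [if_neg hs, hK2' s hs]
    rw [step1, ← step2, lintegral_lintegral_swap hKmeas.aemeasurable]
  show ∫⁻ r in Set.Ioi (0:ℝ), (D r)⁻¹ * Φ r ≤ _
  rw [hswap]
  apply le_of_eq
  -- tail integral
  have tail : ∀ s : ℝ, 0 < s →
      (∫⁻ t in Set.Ici s, (D t)⁻¹) = ENNReal.ofReal (s^(-(m:ℝ)) / m) := by
    intro s hs
    have hrestr : (volume : Measure ℝ).restrict (Set.Ici s)
        = (volume : Measure ℝ).restrict (Set.Ioi s) :=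
      (Measure.restrict_congr_set Ioi_ae_eq_Ici).symm
    rw [hrestr]
    have hpt : ∀ t ∈ Set.Ioi s, (D t)⁻¹ = ENNReal.ofReal (t ^ (-((m:ℝ)+1))) := by
      intro t ht
      have ht0 : (0:ℝ) < t := hs.trans ht
      show (ENNReal.ofReal t ^ (m+1))⁻¹ = ENNReal.ofReal (t ^ (-((m:ℝ)+1)))
      rw [← ENNReal.ofReal_pow ht0.le, ← ENNReal.ofReal_inv_of_pos (pow_pos ht0 _)]
      congr 1
      rw [Real.rpow_neg ht0.le, ← Real.rpow_natCast t (m+1)]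
      push_cast
      ring_nf
    rw [setLIntegral_congr_fun measurableSet_Ioi
      hpt]
    have hlt : -((m:ℝ)+1) < -1 := by linarith
    rw [← ofReal_integral_eq_lintegral_ofReal (integrableOn_Ioi_rpow_of_lt hlt hs) ?nn]
    case nn =>
      filter_upwards [ae_restrict_mem measurableSet_Ioi] with t ht
      exact Real.rpow_nonneg (hs.trans ht).le _
    rw [integral_Ioi_rpow_of_lt hlt hs]
    congr 1
    have : -((m:ℝ)+1) + 1 = -m := by ring
    rw [this]
    rw [div_eq_div_iff (by linarith) (by linarith)]
    ring
  calc ∫⁻ s in Set.Ioi (0:ℝ), ψ2 s * ∫⁻ t in Set.Ici s, (D t)⁻¹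
      = ∫⁻ s in Set.Ioi (0:ℝ), ENNReal.ofReal (1/(m:ℝ)) * (ENNReal.ofReal s * (u s)^(2:ℝ)) := by
        apply setLIntegral_congr_fun measurableSet_Ioi
        intro s hs
        dsimp only
        rw [tail s hs, hψ2def]
        have e : ENNReal.ofReal s ^ (m+1) * ENNReal.ofReal (s^(-(m:ℝ))/m)
            = ENNReal.ofReal (1/(m:ℝ)) * ENNReal.ofReal s := by
          rw [← ENNReal.ofReal_pow hs.le, ← ENNReal.ofReal_mul (pow_nonneg hs.le _),
            ← ENNReal.ofReal_mul (by positivity)]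
          congr 1
          have hsm : s^(m+1) * s^(-(m:ℝ)) = s := by
            rw [← Real.rpow_natCast s (m+1), ← Real.rpow_add hs]
            have e9 : ((m+1:ℕ):ℝ) + -(m:ℝ) = 1 := by push_cast; ring
            rw [e9, Real.rpow_one]
          calc s^(m+1) * (s^(-(m:ℝ))/m) = (s^(m+1) * s^(-(m:ℝ)))/m := by ring
            _ = s/m := by rw [hsm]
            _ = 1/m * s := by ring
        calc ENNReal.ofReal s ^ (m+1) * (u s)^(2:ℝ) * ENNReal.ofReal (s^(-(m:ℝ))/m)
            = (ENNReal.ofReal s ^ (m+1) * ENNReal.ofReal (s^(-(m:ℝ))/m)) * (u s)^(2:ℝ) := by ring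
          _ = ENNReal.ofReal (1/(m:ℝ)) * (ENNReal.ofReal s * (u s)^(2:ℝ)) := by rw [e]; ring
    _ = ENNReal.ofReal (1/(m:ℝ)) * ∫⁻ s in Set.Ioi (0:ℝ), ENNReal.ofReal s * (u s)^(2:ℝ) :=
        lintegral_const_mul' _ _ ENNReal.ofReal_ne_top

lemma ae_hasDerivAt_primitive (h : ℝ → ℂ) (hh : LocallyIntegrable h volume) :
    ∀ᵐ x ∂(volume : Measure ℝ), HasDerivAt (fun y => ∫ t in (0:ℝ)..y, h t) (h x) x := by
  have hint : ∀ a b : ℝ, IntervalIntegrable h volume a b := fun a b =>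
    (hh.integrableOn_isCompact isCompact_uIcc).intervalIntegrable
  have key := (IsUnifLocDoublingMeasure.vitaliFamily (volume : Measure ℝ) 1).ae_tendsto_average_norm_sub hh
  filter_upwards [key] with x hx
  rw [hasDerivAt_iff_tendsto, ← nhdsNE_sup_pure x, tendsto_sup]
  constructor
  · rw [← nhdsLT_sup_nhdsGT x, tendsto_sup]
    have bound : ∀ a b : ℝ, a < b →
        ‖(∫ t in (0:ℝ)..b, h t) - (∫ t in (0:ℝ)..a, h t) - (b - a) • h x‖
          ≤ (b - a) * ⨍ t in Icc a b, ‖h t - h x‖ := by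
      intro a b hab
      have h1 : (∫ t in (0:ℝ)..b, h t) - (∫ t in (0:ℝ)..a, h t) = ∫ t in a..b, h t := by
        rw [← intervalIntegral.integral_add_adjacent_intervals (hint 0 a) (hint a b)]; ring
      have h2 : (b - a) • h x = ∫ _t in a..b, h x := (intervalIntegral.integral_const (h x)).symm
      rw [h1, h2, ← intervalIntegral.integral_sub (hint a b) intervalIntegrable_const]
      calc ‖∫ t in a..b, h t - h x‖ ≤ ∫ t in Set.uIoc a b, ‖h t - h x‖ :=
            intervalIntegral.norm_integral_le_integral_norm_uIoc
        _ = ∫ t in Icc a b, ‖h t - h x‖ := by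
            rw [uIoc_of_le hab.le, integral_Icc_eq_integral_Ioc]
        _ = (b - a) * ⨍ t in Icc a b, ‖h t - h x‖ := by
            rw [setAverage_eq, Real.volume_real_Icc_of_le hab.le, smul_eq_mul,
              ← mul_assoc, mul_inv_cancel₀ (by linarith), one_mul]
    constructor
    · -- left limit y < x
      apply squeeze_zero' (g := fun y => ⨍ t in Icc y x, ‖h t - h x‖)
      · filter_upwards with y; positivity
      · filter_upwards [self_mem_nhdsWithin] with y (hy : y < x)
        have hb := bound y x hy
        have : ‖(∫ t in (0:ℝ)..y, h t) - (∫ t in (0:ℝ)..x, h t) - (y - x) • h x‖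
            = ‖(∫ t in (0:ℝ)..x, h t) - (∫ t in (0:ℝ)..y, h t) - (x - y) • h x‖ := by
          rw [← norm_neg]; congr 1; module
        rw [this]
        have hxy : ‖y - x‖ = x - y := by rw [Real.norm_eq_abs, abs_sub_comm, abs_of_pos (by linarith)]
        rw [hxy]
        calc (x - y)⁻¹ * ‖(∫ t in (0:ℝ)..x, h t) - (∫ t in (0:ℝ)..y, h t) - (x - y) • h x‖
            ≤ (x - y)⁻¹ * ((x - y) * ⨍ t in Icc y x, ‖h t - h x‖) := by
              apply mul_le_mul_of_nonneg_left hb (inv_nonneg.2 (by linarith))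
          _ = ⨍ t in Icc y x, ‖h t - h x‖ := by
              rw [← mul_assoc, inv_mul_cancel₀ (by linarith), one_mul]
      · exact hx.comp (Real.tendsto_Icc_vitaliFamily_left x)
    · -- right limit y > x
      apply squeeze_zero' (g := fun y => ⨍ t in Icc x y, ‖h t - h x‖)
      · filter_upwards with y; positivity
      · filter_upwards [self_mem_nhdsWithin] with y (hy : x < y)
        have hb := bound x y hy
        have hxy : ‖y - x‖ = y - x := by rw [Real.norm_eq_abs, abs_of_pos (by linarith)]
        rw [hxy]
        calc (y - x)⁻¹ * ‖(∫ t in (0:ℝ)..y, h t) - (∫ t in (0:ℝ)..x, h t) - (y - x) • h x‖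
            ≤ (y - x)⁻¹ * ((y - x) * ⨍ t in Icc x y, ‖h t - h x‖) := by
              apply mul_le_mul_of_nonneg_left hb (inv_nonneg.2 (by linarith))
          _ = ⨍ t in Icc x y, ‖h t - h x‖ := by
              rw [← mul_assoc, inv_mul_cancel₀ (by linarith), one_mul]
      · exact hx.comp (Real.tendsto_Icc_vitaliFamily_right x)
  · -- pure x
    have := tendsto_pure_nhds
      (fun x' => ‖x' - x‖⁻¹ * ‖(∫ t in (0:ℝ)..x', h t) - (∫ t in (0:ℝ)..x, h t) - (x' - x) • h x‖) x
    simpa using this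


/-- The measure `r dr` on `(0, ∞)`. -/
def rdr : Measure ℝ := (volume.restrict (Set.Ioi (0:ℝ))).withDensity (fun r => ENNReal.ofReal r)

lemma lintegral_rdr (g : ℝ → ℝ≥0∞) (hg : Measurable g) :
    ∫⁻ r, g r ∂rdr = ∫⁻ r in Set.Ioi (0:ℝ), ENNReal.ofReal r * g r := by
  rw [rdr, lintegral_withDensity_eq_lintegral_mul _ ENNReal.measurable_ofReal hg]
  rfl

lemma eLpNorm2_rdr (g : ℝ → ℂ) (hg : Measurable g) :
    eLpNorm g 2 rdr
      = (∫⁻ s in Set.Ioi (0:ℝ), ENNReal.ofReal s * (‖g s‖₊ : ℝ≥0∞)^(2:ℝ))^(2⁻¹:ℝ) := by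
  rw [eLpNorm_eq_lintegral_rpow_enorm_toReal two_ne_zero ENNReal.ofNat_ne_top]
  rw [lintegral_rdr _ (hg.enorm.pow_const _)]
  norm_num
  rfl

theorem stmt9 (m : ℕ) (hm : 1 ≤ m) :
    ∃ C : ℝ, 0 < C ∧ ∀ f : ℝ → ℂ,
      Measurable f → MemLp f 2 rdr →
      ∃ g' : ℝ → ℂ,
        (∀ᵐ r ∂(volume.restrict (Set.Ioi (0:ℝ))),
          HasDerivAt (fun r : ℝ => ((r:ℂ)^m)⁻¹ * ∫ s in Set.Ioc (0:ℝ) r, (s:ℂ)^m * f s)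
            (g' r) r) ∧
        eLpNorm g' 2 rdr
          + eLpNorm (fun r : ℝ => (((r:ℂ)^m)⁻¹ * ∫ s in Set.Ioc (0:ℝ) r, (s:ℂ)^m * f s) / (r:ℂ))
              2 rdr
        ≤ ENNReal.ofReal C * eLpNorm f 2 rdr := by
  refine ⟨(m:ℝ) + 2, by positivity, ?_⟩
  intro f hfm hf2
  set u : ℝ → ℝ≥0∞ := fun s => (‖f s‖₊ : ℝ≥0∞) with hudef
  have humeas : Measurable u := hfm.enorm
  -- finiteness of the weighted L² integral
  have hA2 : (∫⁻ s in Set.Ioi (0:ℝ), ENNReal.ofReal s * (u s)^(2:ℝ)) < ⊤ := by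
    have := hf2.2
    rw [eLpNorm2_rdr f hfm] at this
    exact (ENNReal.rpow_lt_top_iff_of_pos (by norm_num : (0:ℝ) < 2⁻¹)).1 this
  -- the integrand is integrable on Ioc 0 R
  have hmeasg : Measurable (fun s : ℝ => (s:ℂ)^m * f s) :=
    (Complex.measurable_ofReal.pow_const m).mul hfm
  have hnorm_eq : ∀ s : ℝ, 0 < s →
      (‖(s:ℂ)^m * f s‖₊ : ℝ≥0∞) = (ENNReal.ofReal s)^m * u s := by
    intro s hs
    rw [← enorm_eq_nnnorm, ← ofReal_norm, norm_mul, norm_pow, Complex.norm_real, Real.norm_eq_abs,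
      abs_of_pos hs, ENNReal.ofReal_mul (by positivity), ENNReal.ofReal_pow hs.le,
      ofReal_norm, enorm_eq_nnnorm]
  have hIoc : ∀ R : ℝ, 0 < R → IntegrableOn (fun s : ℝ => (s:ℂ)^m * f s) (Set.Ioc 0 R) volume := by
    intro R hR
    refine ⟨hmeasg.aestronglyMeasurable, ?_⟩
    rw [show HasFiniteIntegral (fun s : ℝ => (s:ℂ)^m * f s) (volume.restrict (Set.Ioc 0 R))
        ↔ (∫⁻ s in Set.Ioc (0:ℝ) R, (‖(s:ℂ)^m * f s‖₊ : ℝ≥0∞)) < ⊤ from Iff.rfl]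
    have step1 : (∫⁻ s in Set.Ioc (0:ℝ) R, (‖(s:ℂ)^m * f s‖₊ : ℝ≥0∞))
        ≤ (ENNReal.ofReal R)^(m-1) * ∫⁻ s in Set.Ioc (0:ℝ) R, ENNReal.ofReal s * u s := by
      rw [← lintegral_const_mul' _ _ (ENNReal.pow_ne_top ENNReal.ofReal_ne_top)]
      apply setLIntegral_mono (measurable_const.mul (ENNReal.measurable_ofReal.mul humeas))
      intro s hs
      rw [hnorm_eq s hs.1]
      have e : (ENNReal.ofReal s)^m = (ENNReal.ofReal s)^(m-1) * ENNReal.ofReal s := by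
        rw [← pow_succ, Nat.sub_add_cancel hm]
      rw [e, mul_assoc]
      exact mul_le_mul_left
        (pow_le_pow_left₀ zero_le (ENNReal.ofReal_le_ofReal hs.2) _) _
    have step2 : (∫⁻ s in Set.Ioc (0:ℝ) R, ENNReal.ofReal s * u s)
        ≤ (ENNReal.ofReal R * ENNReal.ofReal R)^(2⁻¹:ℝ)
          * (∫⁻ s in Set.Ioi (0:ℝ), ENNReal.ofReal s * (u s)^(2:ℝ))^(2⁻¹:ℝ) := by
      have hpt : ∀ s : ℝ, ENNReal.ofReal s * u s
          = (ENNReal.ofReal s)^(2⁻¹:ℝ) * ((ENNReal.ofReal s)^(2⁻¹:ℝ) * u s) := by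
        intro s
        rw [← mul_assoc, ← ENNReal.rpow_add_of_nonneg _ _ (by norm_num) (by norm_num)]
        norm_num
      have key := aux_CS (volume.restrict (Set.Ioc (0:ℝ) R))
        (fun s => (ENNReal.ofReal s)^(2⁻¹:ℝ)) (fun s => (ENNReal.ofReal s)^(2⁻¹:ℝ) * u s)
        (ENNReal.measurable_ofReal.pow_const _).aemeasurable
        ((ENNReal.measurable_ofReal.pow_const _).mul humeas).aemeasurable
      rw [lintegral_congr (fun s => (hpt s).symm)] at key
      refine key.trans (mul_le_mul' (ENNReal.rpow_le_rpow ?_ (by norm_num))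
        (ENNReal.rpow_le_rpow ?_ (by norm_num)))
      · calc (∫⁻ s in Set.Ioc (0:ℝ) R, ((ENNReal.ofReal s)^(2⁻¹:ℝ))^(2:ℝ))
            = ∫⁻ s in Set.Ioc (0:ℝ) R, ENNReal.ofReal s :=
              lintegral_congr fun s => ENNReal.rpow_inv_rpow (by norm_num) _
          _ ≤ ∫⁻ _s in Set.Ioc (0:ℝ) R, ENNReal.ofReal R :=
              setLIntegral_mono measurable_const fun s hs => ENNReal.ofReal_le_ofReal hs.2
          _ = ENNReal.ofReal R * ENNReal.ofReal R := by
              rw [setLIntegral_const, Real.volume_Ioc, sub_zero]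
      · calc (∫⁻ s in Set.Ioc (0:ℝ) R, ((ENNReal.ofReal s)^(2⁻¹:ℝ) * u s)^(2:ℝ))
            = ∫⁻ s in Set.Ioc (0:ℝ) R, ENNReal.ofReal s * (u s)^(2:ℝ) := by
              apply lintegral_congr
              intro s
              rw [ENNReal.mul_rpow_of_nonneg _ _ (by norm_num : (0:ℝ) ≤ 2),
                ENNReal.rpow_inv_rpow (by norm_num)]
          _ ≤ ∫⁻ s in Set.Ioi (0:ℝ), ENNReal.ofReal s * (u s)^(2:ℝ) :=
              lintegral_mono_set Set.Ioc_subset_Ioi_self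
    calc (∫⁻ s in Set.Ioc (0:ℝ) R, (‖(s:ℂ)^m * f s‖₊ : ℝ≥0∞))
        ≤ (ENNReal.ofReal R)^(m-1) * ((ENNReal.ofReal R * ENNReal.ofReal R)^(2⁻¹:ℝ)
            * (∫⁻ s in Set.Ioi (0:ℝ), ENNReal.ofReal s * (u s)^(2:ℝ))^(2⁻¹:ℝ)) :=
          step1.trans (mul_le_mul_right step2 _)
      _ < ⊤ := by
          apply ENNReal.mul_lt_top (ENNReal.pow_lt_top ENNReal.ofReal_lt_top)
          apply ENNReal.mul_lt_top
          · exact ENNReal.rpow_lt_top_of_nonneg (by norm_num)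
              (ENNReal.mul_ne_top ENNReal.ofReal_ne_top ENNReal.ofReal_ne_top)
          · exact ENNReal.rpow_lt_top_of_nonneg (by norm_num) hA2.ne
  -- the global integrand with indicator
  set h : ℝ → ℂ := (Set.Ioi (0:ℝ)).indicator (fun s => (s:ℂ)^m * f s) with hhdef
  have hhmeas : Measurable h := hmeasg.indicator measurableSet_Ioi
  have hloc : LocallyIntegrable h volume := by
    intro x
    refine ⟨Set.Icc (x-1) (x+1), Icc_mem_nhds (by linarith) (by linarith), ?_⟩
    rw [hhdef, IntegrableOn, integrable_indicator_iff measurableSet_Ioi, IntegrableOn,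
      Measure.restrict_restrict measurableSet_Ioi]
    apply (hIoc (max (x+1) 1) (by positivity)).mono_set
    rintro s ⟨h1, h2⟩
    exact ⟨h1, le_trans h2.2 (le_max_left _ _)⟩
  -- the primitive
  set P : ℝ → ℂ := fun x => ∫ t in (0:ℝ)..x, h t with hPdef
  have hint : ∀ a b : ℝ, IntervalIntegrable h volume a b := fun a b =>
    (hloc.integrableOn_isCompact isCompact_uIcc).intervalIntegrable
  have hPcont : Continuous P := intervalIntegral.continuous_primitive hint 0
  have hPF : ∀ x : ℝ, (∫ s in Set.Ioc (0:ℝ) x, (s:ℂ)^m * f s) = P x := by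
    intro x
    rcases le_or_gt 0 x with hx | hx
    · rw [show P x = ∫ t in Set.Ioc (0:ℝ) x, h t from intervalIntegral.integral_of_le hx]
      apply setIntegral_congr_fun measurableSet_Ioc
      intro s hs
      exact (Set.indicator_of_mem (show s ∈ Set.Ioi (0:ℝ) from hs.1) (fun s : ℝ => (s:ℂ)^m * f s)).symm
    · have e1 : Set.Ioc (0:ℝ) x = ∅ := Set.Ioc_eq_empty (by exact fun hc => absurd hx (not_lt.2 hc.le))
      rw [e1]
      have e2 : P x = 0 := by
        show (∫ t in (0:ℝ)..x, h t) = 0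
        rw [intervalIntegral.integral_symm, intervalIntegral.integral_of_le hx.le]
        rw [setIntegral_congr_fun measurableSet_Ioc
          (fun s (hs : s ∈ Set.Ioc x 0) =>
            Set.indicator_of_notMem (by simpa using hs.2) (fun s : ℝ => (s:ℂ)^m * f s))]
        simp
      rw [e2]
      simp
  have hm0 : (0:ℝ) < m := by exact_mod_cast hm
  -- definitions of Q and g'
  set Q : ℝ → ℂ :=
    fun r : ℝ => (((r:ℂ)^m)⁻¹ * ∫ s in Set.Ioc (0:ℝ) r, (s:ℂ)^m * f s) / (r:ℂ) with hQdef
  set g' : ℝ → ℂ := fun r => f r - (m:ℂ) * Q r with hg'def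
  have hFmeas : Measurable (fun x : ℝ => ∫ s in Set.Ioc (0:ℝ) x, (s:ℂ)^m * f s) := by
    rw [show (fun x : ℝ => ∫ s in Set.Ioc (0:ℝ) x, (s:ℂ)^m * f s) = P from funext hPF]
    exact hPcont.measurable
  have hQmeas : Measurable Q := by
    rw [hQdef]
    exact ((Complex.measurable_ofReal.pow_const m).inv.mul hFmeas).div Complex.measurable_ofReal
  refine ⟨g', ?_, ?_⟩
  · -- a.e. differentiability
    have hder := ae_hasDerivAt_primitive h hloc
    filter_upwards [ae_restrict_of_ae hder, ae_restrict_mem measurableSet_Ioi] with r hdr hr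
    have hr0 : (0:ℝ) < r := hr
    have hrne : (r:ℂ) ≠ 0 := Complex.ofReal_ne_zero.2 hr0.ne'
    have hfun : (fun r : ℝ => ((r:ℂ)^m)⁻¹ * ∫ s in Set.Ioc (0:ℝ) r, (s:ℂ)^m * f s)
        = fun r : ℝ => ((r:ℂ)^m)⁻¹ * P r := funext fun x => by rw [hPF x]
    rw [hfun]
    have hc : HasDerivAt (fun y:ℝ => ((y:ℂ)^m)⁻¹)
        (-((m:ℂ) * (r:ℂ)^(m-1)) / ((r:ℂ)^m)^2) r := by
      have := ((hasDerivAt_pow m ((r:ℂ))).inv (pow_ne_zero _ hrne)).comp_ofReal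
      simpa using this
    have hmul := hc.mul hdr
    have hhr : h r = (r:ℂ)^m * f r := Set.indicator_of_mem hr _
    have hval : g' r = -((m:ℂ) * (r:ℂ)^(m-1)) / ((r:ℂ)^m)^2 * P r + ((r:ℂ)^m)⁻¹ * h r := by
      show f r - (m:ℂ) * ((((r:ℂ)^m)⁻¹ * ∫ s in Set.Ioc (0:ℝ) r, (s:ℂ)^m * f s) / (r:ℂ)) = _
      rw [hPF r, hhr]
      obtain ⟨k, hk⟩ : ∃ k, m = k+1 := ⟨m-1, by omega⟩
      subst hk
      simp only [Nat.add_sub_cancel]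
      push_cast
      field_simp
      ring
    rw [hval]
    exact hmul
  · -- the norm bound
    set N : ℝ → ℝ≥0∞ := fun r => ∫⁻ s in Set.Ioc (0:ℝ) r, (ENNReal.ofReal s)^m * u s with hNdef
    have hNmono : Monotone N := fun a b hab => lintegral_mono_set (Set.Ioc_subset_Ioc_right hab)
    have hQpt : ∀ r ∈ Set.Ioi (0:ℝ), ENNReal.ofReal r * (‖Q r‖₊ : ℝ≥0∞)^(2:ℝ)
        ≤ ENNReal.ofReal r * (N r / (ENNReal.ofReal r)^(m+1))^(2:ℝ) := by
      intro r hr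
      have hr0 : (0:ℝ) < r := hr
      apply mul_le_mul_right
      apply ENNReal.rpow_le_rpow _ (by norm_num)
      have hQr : (‖Q r‖₊ : ℝ≥0∞) = (‖P r‖₊ : ℝ≥0∞) / (ENNReal.ofReal r)^(m+1) := by
        have hnorm : ‖Q r‖ = ‖P r‖ / r^(m+1) := by
          show ‖(((r:ℂ)^m)⁻¹ * ∫ s in Set.Ioc (0:ℝ) r, (s:ℂ)^m * f s) / (r:ℂ)‖ = _
          rw [hPF r, norm_div, norm_mul, norm_inv, norm_pow, Complex.norm_real,
            Real.norm_eq_abs, abs_of_pos hr0]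
          rw [inv_mul_eq_div, div_div, ← pow_succ]
        rw [← enorm_eq_nnnorm, ← ofReal_norm, hnorm,
          ENNReal.ofReal_div_of_pos (pow_pos hr0 _), ENNReal.ofReal_pow hr0.le,
          ofReal_norm, enorm_eq_nnnorm]
      rw [hQr]
      apply ENNReal.div_le_div_right
      rw [← hPF r]
      calc (‖∫ s in Set.Ioc (0:ℝ) r, (s:ℂ)^m * f s‖₊ : ℝ≥0∞)
          ≤ ∫⁻ s in Set.Ioc (0:ℝ) r, (‖(s:ℂ)^m * f s‖₊ : ℝ≥0∞) :=
            enorm_integral_le_lintegral_enorm _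
        _ = N r := setLIntegral_congr_fun measurableSet_Ioc
            (fun s hs => hnorm_eq s hs.1)
    have hB : eLpNorm Q 2 rdr ≤ eLpNorm f 2 rdr := by
      rw [eLpNorm2_rdr Q hQmeas, eLpNorm2_rdr f hfm]
      apply ENNReal.rpow_le_rpow _ (by norm_num)
      calc ∫⁻ r in Set.Ioi (0:ℝ), ENNReal.ofReal r * (‖Q r‖₊ : ℝ≥0∞)^(2:ℝ)
          ≤ ∫⁻ r in Set.Ioi (0:ℝ),
              ENNReal.ofReal r * (N r / (ENNReal.ofReal r)^(m+1))^(2:ℝ) :=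
            setLIntegral_mono
              (ENNReal.measurable_ofReal.mul
                ((hNmono.measurable.div (ENNReal.measurable_ofReal.pow_const _)).pow_const _))
              hQpt
        _ ≤ ENNReal.ofReal (1/(m:ℝ))
              * ∫⁻ s in Set.Ioi (0:ℝ), ENNReal.ofReal s * (u s)^(2:ℝ) :=
            hardy_core m hm u humeas (fun s => ENNReal.coe_ne_top)
        _ ≤ 1 * ∫⁻ s in Set.Ioi (0:ℝ), ENNReal.ofReal s * (u s)^(2:ℝ) := by
            apply mul_le_mul_left
            apply ENNReal.ofReal_le_one.2
            rw [div_le_one hm0]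
            exact_mod_cast hm
        _ = ∫⁻ s in Set.Ioi (0:ℝ), ENNReal.ofReal s * (u s)^(2:ℝ) := one_mul _
    have hg'norm : eLpNorm g' 2 rdr ≤ eLpNorm f 2 rdr + (m:ℝ≥0∞) * eLpNorm Q 2 rdr := by
      have heq : g' = f - (m:ℂ) • Q := by funext r; rfl
      rw [heq]
      refine (eLpNorm_sub_le hfm.aestronglyMeasurable
        ((hQmeas.const_smul ((m:ℕ):ℂ)).aestronglyMeasurable) one_le_two).trans ?_
      rw [eLpNorm_const_smul]
      have : (‖((m:ℕ):ℂ)‖₊ : ℝ≥0∞) = (m:ℝ≥0∞) := by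
        have : (‖((m:ℕ):ℂ)‖₊ : NNReal) = (m : NNReal) := by simp
        rw [this]
        simp
      rw [enorm_eq_nnnorm, this]
    calc eLpNorm g' 2 rdr + eLpNorm Q 2 rdr
        ≤ (eLpNorm f 2 rdr + (m:ℝ≥0∞) * eLpNorm Q 2 rdr) + eLpNorm Q 2 rdr :=
          add_le_add_left hg'norm _
      _ ≤ (eLpNorm f 2 rdr + (m:ℝ≥0∞) * eLpNorm f 2 rdr) + eLpNorm f 2 rdr :=
          add_le_add (add_le_add_right (mul_le_mul_right hB _) _) hB
      _ = ((m:ℝ≥0∞) + 2) * eLpNorm f 2 rdr := by ring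
      _ = ENNReal.ofReal ((m:ℝ) + 2) * eLpNorm f 2 rdr := by
          rw [ENNReal.ofReal_add (by positivity) (by norm_num), ENNReal.ofReal_natCast,
            ENNReal.ofReal_ofNat]
end
end

section
/- Let m ≥ 1 be an integer and let ū = (ū₁,ū₂,ū₃) : (0,∞) → ℝ³ be continuously differentiable with ū₃ > 0 and ū₃² = 1 + ū₁² + ū₂² everywhere, and suppose the energy E := π ∫_0^∞ ( |ū₁'(r)|² + |ū₂'(r)|² − |ū₃'(r)|² + (m²/r²)(ū₁(r)² + ū₂(r)²) ) r dr is finite. Then ū₁, ū₂ and ū₃ − 1 belong to Ḣ¹_e, and there is a universal constant C with ‖ū₁‖_{Ḣ¹_e} + ‖ū₂‖_{Ḣ¹_e} + ‖ū₃ − 1‖_{Ḣ¹_e} ≤ C·E^{1/2}(m + E). -/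
open MeasureTheory
open scoped ENNReal

noncomputable section

/-- The energy density (including the factor `r` from the measure `r dr`) of the radial profile
`ū = (u1, u2, u3)` of an `m`-equivariant map into `ℍ²`, with respect to the Minkowski metric. -/
def energyIntegrand (m : ℕ) (u1 u2 u3 : ℝ → ℝ) (r : ℝ) : ℝ :=
  ((deriv u1 r)^2 + (deriv u2 r)^2 - (deriv u3 r)^2
    + ((m:ℝ)^2 / r^2) * ((u1 r)^2 + (u2 r)^2)) * r

/-- The energy `E(u) = π ∫₀^∞ ( |∂_r ū|²_{-1} + (m²/r²)(ū₁² + ū₂²) ) r dr`. -/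
def energy (m : ℕ) (u1 u2 u3 : ℝ → ℝ) : ℝ :=
  Real.pi * ∫ r in Set.Ioi (0:ℝ), energyIntegrand m u1 u2 u3 r

/-- Membership in the equivariant Sobolev-type space `Ḣ¹_e`. -/
def memHe (f : ℝ → ℝ) : Prop :=
  MemLp (deriv f) 2 rdr ∧ MemLp (fun r => f r / r) 2 rdr

/-- The `Ḣ¹_e` norm, `‖f‖²_{Ḣ¹_e} = ‖∂_r f‖²_{L²(r dr)} + m² ‖f/r‖²_{L²(r dr)}`. -/
def HeNorm (m : ℕ) (f : ℝ → ℝ) : ℝ≥0∞ :=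
  (eLpNorm (deriv f) 2 rdr ^ 2
    + (m:ℝ≥0∞)^2 * eLpNorm (fun r => f r / r) 2 rdr ^ 2) ^ ((1:ℝ)/2)

lemma sq_eLpNorm (f : ℝ → ℝ) :
    eLpNorm f 2 rdr ^ 2 = ∫⁻ r in Set.Ioi (0:ℝ), ENNReal.ofReal ((f r)^2 * r) := by
  rw [eLpNorm_eq_lintegral_rpow_enorm_toReal two_ne_zero ENNReal.ofNat_ne_top]
  rw [← ENNReal.rpow_natCast _ 2, ← ENNReal.rpow_mul]
  norm_num
  rw [rdr, lintegral_withDensity_eq_lintegral_mul_non_measurable _ ENNReal.measurable_ofReal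
    (by filter_upwards with x using ENNReal.ofReal_lt_top)]
  apply lintegral_congr
  intro r
  simp only [Pi.mul_apply]
  rw [Real.enorm_eq_ofReal_abs, ← ENNReal.ofReal_pow (abs_nonneg _), sq_abs,
    ENNReal.ofReal_mul (sq_nonneg (f r)), mul_comm]

lemma sum_bound (m : ℕ) (f g : ℝ → ℝ) (K : ℝ)
    (hmeas : Measurable (deriv f))
    (hg : IntegrableOn g (Set.Ioi 0))
    (hbound : ∀ r ∈ Set.Ioi (0:ℝ),
      (deriv f r)^2 * r + (m:ℝ)^2 * ((f r / r)^2 * r) ≤ K * g r) :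
    eLpNorm (deriv f) 2 rdr ^ 2 + (m:ℝ≥0∞)^2 * eLpNorm (fun r => f r / r) 2 rdr ^ 2
      ≤ ENNReal.ofReal (K * ∫ r in Set.Ioi (0:ℝ), g r) := by
  rw [sq_eLpNorm, sq_eLpNorm,
    ← lintegral_const_mul' _ _ (by exact ENNReal.pow_ne_top (ENNReal.natCast_ne_top m)),
    ← lintegral_add_left (show Measurable fun r : ℝ => ENNReal.ofReal ((deriv f r)^2 * r) from
      ((hmeas.pow_const 2).mul measurable_id).ennreal_ofReal)]
  have hKg : ∀ r ∈ Set.Ioi (0:ℝ), 0 ≤ K * g r := by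
    intro r hr
    refine le_trans ?_ (hbound r hr)
    have : 0 < r := hr
    positivity
  calc ∫⁻ r in Set.Ioi (0:ℝ),
        (ENNReal.ofReal ((deriv f r)^2 * r) + (m:ℝ≥0∞)^2 * ENNReal.ofReal ((f r / r)^2 * r))
      ≤ ∫⁻ r in Set.Ioi (0:ℝ), ENNReal.ofReal (K * g r) := by
        apply lintegral_mono_ae
        rw [ae_restrict_iff' measurableSet_Ioi]
        refine Filter.Eventually.of_forall fun r hr => ?_
        have h1 : (m:ℝ≥0∞)^2 = ENNReal.ofReal ((m:ℝ)^2) := by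
          rw [ENNReal.ofReal_pow (by positivity), ENNReal.ofReal_natCast]
        have hrpos : (0:ℝ) < r := hr
        rw [h1, ← ENNReal.ofReal_mul (by positivity), ← ENNReal.ofReal_add (by positivity) (by positivity)]
        exact ENNReal.ofReal_le_ofReal (hbound r hr)
    _ = ENNReal.ofReal (K * ∫ r in Set.Ioi (0:ℝ), g r) := by
        rw [← ofReal_integral_eq_lintegral_ofReal (hg.const_mul K)
          ((ae_restrict_iff' measurableSet_Ioi).mpr (Filter.Eventually.of_forall hKg)),
          integral_const_mul]

lemma lt_top_parts (m : ℕ) (hm : 1 ≤ m) {a b : ℝ≥0∞} {c : ℝ}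
    (h : a^2 + (m:ℝ≥0∞)^2 * b^2 ≤ ENNReal.ofReal c) : a < ⊤ ∧ b < ⊤ := by
  have hc : (ENNReal.ofReal c) ≠ ⊤ := ENNReal.ofReal_ne_top
  have hm0 : ((m:ℝ≥0∞))^2 ≠ 0 := pow_ne_zero 2 (Nat.cast_ne_zero.mpr (by omega))
  constructor
  · rw [lt_top_iff_ne_top]
    intro ha
    rw [ha] at h
    rw [ENNReal.top_pow (by norm_num), top_add, top_le_iff] at h
    exact hc h
  · rw [lt_top_iff_ne_top]
    intro hb
    rw [hb] at h
    rw [ENNReal.top_pow (by norm_num), ENNReal.mul_top hm0, add_top, top_le_iff] at h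
    exact hc h

lemma henorm_aux (m : ℕ) (f : ℝ → ℝ) {S : ℝ} (hS : 0 ≤ S)
    (h : eLpNorm (deriv f) 2 rdr ^ 2 + (m:ℝ≥0∞)^2 * eLpNorm (fun r => f r / r) 2 rdr ^ 2
      ≤ ENNReal.ofReal S) :
    HeNorm m f ≤ ENNReal.ofReal (Real.sqrt S) := by
  rw [HeNorm, Real.sqrt_eq_rpow, ← ENNReal.ofReal_rpow_of_nonneg hS (by norm_num)]
  exact ENNReal.rpow_le_rpow h (by norm_num)

set_option maxHeartbeats 1000000 in
theorem stmt11 :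
    ∃ C : ℝ, 0 < C ∧ ∀ (m : ℕ), 1 ≤ m → ∀ u1 u2 u3 : ℝ → ℝ,
      ContDiffOn ℝ 1 u1 (Set.Ioi 0) → ContDiffOn ℝ 1 u2 (Set.Ioi 0) →
      ContDiffOn ℝ 1 u3 (Set.Ioi 0) →
      (∀ r ∈ Set.Ioi (0:ℝ), 0 < u3 r) →
      (∀ r ∈ Set.Ioi (0:ℝ), (u3 r)^2 = 1 + (u1 r)^2 + (u2 r)^2) →
      IntegrableOn (energyIntegrand m u1 u2 u3) (Set.Ioi 0) →
      memHe u1 ∧ memHe u2 ∧ memHe (fun r => u3 r - 1) ∧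
      HeNorm m u1 + HeNorm m u2 + HeNorm m (fun r => u3 r - 1)
        ≤ ENNReal.ofReal
            (C * Real.sqrt (energy m u1 u2 u3) * ((m:ℝ) + energy m u1 u2 u3)) := by
  refine ⟨6, by norm_num, ?_⟩
  intro m hm u1 u2 u3 hu1 hu2 hu3 hpos hcon hint
  have hm1 : (1:ℝ) ≤ (m:ℝ) := by exact_mod_cast hm
  obtain ⟨EI, hEIdef⟩ : ∃ f : ℝ → ℝ, energyIntegrand m u1 u2 u3 = f := ⟨_, rfl⟩
  rw [hEIdef] at hint
  obtain ⟨I, hIdef⟩ : ∃ I : ℝ, (∫ r in Set.Ioi (0:ℝ), EI r) = I := ⟨_, rfl⟩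
  -- differentiability
  have hd1 : ∀ r ∈ Set.Ioi (0:ℝ), HasDerivAt u1 (deriv u1 r) r := fun r hr =>
    ((hu1.differentiableOn one_ne_zero).differentiableAt (isOpen_Ioi.mem_nhds hr)).hasDerivAt
  have hd2 : ∀ r ∈ Set.Ioi (0:ℝ), HasDerivAt u2 (deriv u2 r) r := fun r hr =>
    ((hu2.differentiableOn one_ne_zero).differentiableAt (isOpen_Ioi.mem_nhds hr)).hasDerivAt
  have hd3 : ∀ r ∈ Set.Ioi (0:ℝ), HasDerivAt u3 (deriv u3 r) r := fun r hr =>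
    ((hu3.differentiableOn one_ne_zero).differentiableAt (isOpen_Ioi.mem_nhds hr)).hasDerivAt
  -- the key derivative identity
  have hkey : ∀ r ∈ Set.Ioi (0:ℝ),
      u3 r * deriv u3 r = u1 r * deriv u1 r + u2 r * deriv u2 r := by
    intro r hr
    have hw : HasDerivAt (fun t => (u3 t)^2 - (1 + (u1 t)^2 + (u2 t)^2))
        ((2 * u3 r ^ 1 * deriv u3 r) - (0 + 2 * u1 r ^ 1 * deriv u1 r + 2 * u2 r ^ 1 * deriv u2 r)) r := by
      have h3 := (hd3 r hr).pow 2
      have h1 := (hd1 r hr).pow 2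
      have h2 := (hd2 r hr).pow 2
      have hc : HasDerivAt (fun _ : ℝ => (1:ℝ)) 0 r := hasDerivAt_const r 1
      have := h3.sub ((hc.add h1).add h2)
      simp only [pow_one, zero_add] at this ⊢
      exact this.congr_deriv (by norm_num)
    have hev : (fun t => (u3 t)^2 - (1 + (u1 t)^2 + (u2 t)^2)) =ᶠ[nhds r] (fun _ => (0:ℝ)) := by
      filter_upwards [isOpen_Ioi.mem_nhds hr] with t ht
      have := hcon t ht
      linarith
    have h0 : HasDerivAt (fun t => (u3 t)^2 - (1 + (u1 t)^2 + (u2 t)^2)) 0 r :=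
      (hasDerivAt_const r (0:ℝ)).congr_of_eventuallyEq hev
    have := hw.unique h0
    simp only [pow_one] at this
    linarith
  -- Cauchy-Schwarz consequence
  have hCS : ∀ r ∈ Set.Ioi (0:ℝ), (1 + ((u1 r)^2 + (u2 r)^2)) * (deriv u3 r)^2
      ≤ ((u1 r)^2 + (u2 r)^2) * ((deriv u1 r)^2 + (deriv u2 r)^2) := by
    intro r hr
    have hk := hkey r hr
    have hc := hcon r hr
    have hk2 : (u3 r * deriv u3 r)^2 = (u1 r * deriv u1 r + u2 r * deriv u2 r)^2 := by rw [hk]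
    have hcz : (u3 r)^2 * (deriv u3 r)^2 = (1 + (u1 r)^2 + (u2 r)^2) * (deriv u3 r)^2 := by
      rw [hc]
    nlinarith [hk2, hcz, sq_nonneg (u1 r * deriv u2 r - u2 r * deriv u1 r)]
  have hu3ge1 : ∀ r ∈ Set.Ioi (0:ℝ), 1 ≤ u3 r := by
    intro r hr
    nlinarith [hpos r hr, hcon r hr, sq_nonneg (u1 r), sq_nonneg (u2 r)]
  have hzD : ∀ r ∈ Set.Ioi (0:ℝ),
      (deriv u3 r)^2 ≤ (deriv u1 r)^2 + (deriv u2 r)^2 := by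
    intro r hr
    nlinarith [hCS r hr, sq_nonneg (u1 r), sq_nonneg (u2 r), sq_nonneg (deriv u1 r),
      sq_nonneg (deriv u2 r), sq_nonneg (deriv u3 r)]
  -- the basic identity EI r * r = ...
  have hEIr : ∀ r ∈ Set.Ioi (0:ℝ), EI r * r
      = ((deriv u1 r)^2 + (deriv u2 r)^2 - (deriv u3 r)^2) * r^2
        + (m:ℝ)^2 * ((u1 r)^2 + (u2 r)^2) := by
    intro r hr
    have hr0 : (r:ℝ) ≠ 0 := ne_of_gt hr
    rw [← hEIdef]
    unfold energyIntegrand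
    field_simp
  have hEI0 : ∀ r ∈ Set.Ioi (0:ℝ), 0 ≤ EI r := by
    intro r hr
    have hr' : (0:ℝ) < r := hr
    have h1 := hzD r hr
    have h2 := hEIr r hr
    nlinarith [sq_nonneg (u1 r), sq_nonneg (u2 r), sq_nonneg r, mul_pos hr' hr']
  have hI0 : (0:ℝ) ≤ I := by
    rw [← hIdef]
    exact setIntegral_nonneg measurableSet_Ioi hEI0
  -- 2 m |deriv u3| ≤ EI
  have h2mz : ∀ r ∈ Set.Ioi (0:ℝ), 2*(m:ℝ)*|deriv u3 r| ≤ EI r := by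
    intro r hr
    have hr' : (0:ℝ) < r := hr
    have hmain : 2*(m:ℝ)*|deriv u3 r| * r
        ≤ ((deriv u1 r)^2 + (deriv u2 r)^2 - (deriv u3 r)^2) * r^2
          + (m:ℝ)^2 * ((u1 r)^2 + (u2 r)^2) := by
      have hcS : (u3 r)^2 = 1 + ((u1 r)^2 + (u2 r)^2) := by rw [hcon r hr]; ring
      have hCS' := hCS r hr
      have hzD' := hzD r hr
      rcases eq_or_lt_of_le (show (0:ℝ) ≤ (u1 r)^2 + (u2 r)^2 by positivity) with h0 | h0
      · have hz : deriv u3 r ^ 2 ≤ 0 := by nlinarith [hCS', sq_nonneg (deriv u3 r)]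
        have hz0 : deriv u3 r = 0 := by nlinarith [sq_nonneg (deriv u3 r)]
        rw [hz0]
        simp only [abs_zero, mul_zero, zero_mul]
        nlinarith [mul_nonneg (by positivity : (0:ℝ) ≤ (deriv u1 r)^2 + (deriv u2 r)^2)
          (sq_nonneg r), sq_nonneg (u1 r), sq_nonneg (u2 r), sq_nonneg (m:ℝ)]
      · have key : (2*(m:ℝ)*|deriv u3 r| * r) * ((u1 r)^2 + (u2 r)^2)
            ≤ (((deriv u1 r)^2 + (deriv u2 r)^2 - (deriv u3 r)^2) * r^2
              + (m:ℝ)^2 * ((u1 r)^2 + (u2 r)^2)) * ((u1 r)^2 + (u2 r)^2) := by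
          nlinarith [sq_nonneg (|deriv u3 r| * r - (m:ℝ) * ((u1 r)^2 + (u2 r)^2)),
            mul_le_mul_of_nonneg_right hCS' (sq_nonneg r), sq_abs (deriv u3 r)]
        exact le_of_mul_le_mul_right key h0
    have h2 : 2*(m:ℝ)*|deriv u3 r| * r ≤ EI r * r := by
      rw [hEIr r hr]; exact hmain
    exact le_of_mul_le_mul_right h2 hr'
  have hc3 : ContinuousOn (deriv u3) (Set.Ioi 0) :=
    hu3.continuousOn_deriv_of_isOpen isOpen_Ioi le_rfl
  have h2m : (0:ℝ) < 2*(m:ℝ) := by linarith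
  -- oscillation bound
  have hosc : ∀ a b : ℝ, 0 < a → a ≤ b → |u3 b - u3 a| ≤ I / (2*(m:ℝ)) := by
    intro a b ha hab
    have hsub : Set.uIcc a b ⊆ Set.Ioi 0 := by
      rw [Set.uIcc_of_le hab]
      intro x hx
      exact lt_of_lt_of_le ha hx.1
    have hdiff : ∀ x ∈ Set.uIcc a b, DifferentiableAt ℝ u3 x := fun x hx =>
      (hd3 x (hsub hx)).differentiableAt
    have hii : IntervalIntegrable (deriv u3) volume a b :=
      (hc3.mono hsub).intervalIntegrable
    have hEIii : IntervalIntegrable EI volume a b :=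
      (hint.mono_set hsub).intervalIntegrable
    have hftc : ∫ y in a..b, deriv u3 y = u3 b - u3 a :=
      intervalIntegral.integral_deriv_eq_sub hdiff hii
    have habs : |u3 b - u3 a| ≤ ∫ y in a..b, |deriv u3 y| := by
      rw [← hftc]
      exact intervalIntegral.abs_integral_le_integral_abs hab
    have hmono : ∫ y in a..b, |deriv u3 y| ≤ ∫ y in a..b, EI y / (2*(m:ℝ)) := by
      apply intervalIntegral.integral_mono_on hab hii.abs (hEIii.div_const _)
      intro x hx
      have hx' : x ∈ Set.Ioi (0:ℝ) := hsub (by rw [Set.uIcc_of_le hab]; exact hx)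
      rw [le_div_iff₀ h2m]
      calc |deriv u3 x| * (2*(m:ℝ)) = 2*(m:ℝ)*|deriv u3 x| := by ring
        _ ≤ EI x := h2mz x hx'
    have hIoc : ∫ y in a..b, EI y / (2*(m:ℝ)) = (∫ y in Set.Ioc a b, EI y) / (2*(m:ℝ)) := by
      rw [intervalIntegral.integral_div, intervalIntegral.integral_of_le hab]
    have hIle : ∫ y in Set.Ioc a b, EI y ≤ I := by
      rw [← hIdef]
      apply setIntegral_mono_set hint
        ((ae_restrict_iff' measurableSet_Ioi).mpr (Filter.Eventually.of_forall hEI0))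
      exact (Set.Ioc_subset_Ioi_self.trans (Set.Ioi_subset_Ioi ha.le)).eventuallyLE
    calc |u3 b - u3 a| ≤ ∫ y in a..b, |deriv u3 y| := habs
      _ ≤ ∫ y in a..b, EI y / (2*(m:ℝ)) := hmono
      _ = (∫ y in Set.Ioc a b, EI y) / (2*(m:ℝ)) := hIoc
      _ ≤ I / (2*(m:ℝ)) := (div_le_div_iff_of_pos_right h2m).mpr hIle
  -- supremum bound
  have hsup : ∀ r ∈ Set.Ioi (0:ℝ), u3 r ≤ 1 + I/(2*(m:ℝ)) := by
    by_contra hcon2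
    push_neg at hcon2
    obtain ⟨r0, hr0, hB⟩ := hcon2
    have hlow : ∀ s ∈ Set.Ioi (0:ℝ), u3 r0 - I/(2*(m:ℝ)) ≤ u3 s := by
      intro s hs
      rcases le_total s r0 with h | h
      · have h1 := (abs_le.mp (hosc s r0 hs h)).2
        linarith
      · have h1 := (abs_le.mp (hosc r0 s hr0 h)).1
        linarith
    have hbase : 1 < u3 r0 - I/(2*(m:ℝ)) := by linarith
    have hc0 : 0 < (u3 r0 - I/(2*(m:ℝ)))^2 - 1 := by nlinarith
    obtain ⟨c, hcdef⟩ : ∃ c : ℝ, c = (u3 r0 - I/(2*(m:ℝ)))^2 - 1 := ⟨_, rfl⟩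
    rw [← hcdef] at hc0
    have hm2 : (1:ℝ) ≤ (m:ℝ)^2 := one_le_pow₀ hm1
    have hEIlow : ∀ s ∈ Set.Ioi (0:ℝ), c / s ≤ EI s := by
      intro s hs
      have hs' : (0:ℝ) < s := hs
      rw [div_le_iff₀ hs']
      rw [hEIr s hs]
      have h1 := hzD s hs
      have h2 := hcon s hs
      have h3 := hlow s hs
      have hb0 : (0:ℝ) ≤ u3 r0 - I/(2*(m:ℝ)) := by linarith
      have hsq : (u3 r0 - I/(2*(m:ℝ))) * (u3 r0 - I/(2*(m:ℝ))) ≤ u3 s * u3 s :=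
        mul_self_le_mul_self hb0 h3
      have hdz : 0 ≤ ((deriv u1 s)^2 + (deriv u2 s)^2 - (deriv u3 s)^2) * s^2 :=
        mul_nonneg (by linarith) (sq_nonneg s)
      have hS0 : (0:ℝ) ≤ (u1 s)^2 + (u2 s)^2 := by positivity
      have hSc : c ≤ (u1 s)^2 + (u2 s)^2 := by nlinarith [hsq, h2, hcdef]
      linarith [mul_le_mul_of_nonneg_right hm2 hS0, hdz, hSc]
    set T := Real.exp ((I+1)/c) with hTdef
    have hT1 : (1:ℝ) ≤ T := by
      have h0 : (0:ℝ) ≤ (I+1)/c := by positivity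
      linarith [Real.add_one_le_exp ((I+1)/c)]
    have hinv_int : IntegrableOn (fun s => c / s) (Set.Ioc 1 T) := by
      apply (ContinuousOn.integrableOn_Icc ?_).mono_set Set.Ioc_subset_Icc_self
      apply ContinuousOn.div continuousOn_const continuousOn_id
      intro x hx
      exact ne_of_gt (lt_of_lt_of_le one_pos hx.1)
    have hIocsub : Set.Ioc (1:ℝ) T ⊆ Set.Ioi 0 := fun x hx => lt_trans one_pos hx.1
    have hmono2 : ∫ s in Set.Ioc 1 T, c / s ≤ ∫ s in Set.Ioc 1 T, EI s := by
      apply setIntegral_mono_on hinv_int (hint.mono_set hIocsub) measurableSet_Ioc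
      intro x hx
      exact hEIlow x (hIocsub hx)
    have hup : ∫ s in Set.Ioc 1 T, EI s ≤ I := hIdef ▸
      setIntegral_mono_set hint
        ((ae_restrict_iff' measurableSet_Ioi).mpr (Filter.Eventually.of_forall hEI0))
        hIocsub.eventuallyLE
    have hlog : ∫ s in Set.Ioc 1 T, c / s = c * Real.log T := by
      rw [← intervalIntegral.integral_of_le hT1]
      simp_rw [div_eq_mul_inv c]
      rw [intervalIntegral.integral_const_mul, integral_inv, div_one]
      rw [Set.uIcc_of_le hT1]
      intro hmem
      exact absurd hmem.1 (by norm_num)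
    have hfin : c * Real.log T = I + 1 := by
      rw [hTdef, Real.log_exp]
      field_simp
    rw [hlog, hfin] at hmono2
    linarith
  -- pointwise bounds with B and K
  obtain ⟨B, hBdef⟩ : ∃ B : ℝ, B = 1 + I/(2*(m:ℝ)) := ⟨_, rfl⟩
  have hB1 : (1:ℝ) ≤ B := by
    have : (0:ℝ) ≤ I/(2*(m:ℝ)) := by positivity
    rw [hBdef]; linarith
  have hsup' : ∀ r ∈ Set.Ioi (0:ℝ), u3 r ≤ B := fun r hr => hBdef ▸ hsup r hr
  obtain ⟨K, hKdef⟩ : ∃ K : ℝ, K = B^2 + B := ⟨_, rfl⟩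
  have hK0 : (0:ℝ) ≤ K := by nlinarith
  have hK1 : (1:ℝ) ≤ K := by nlinarith
  have hKB : B^2 ≤ K := by nlinarith
  have hDle : ∀ r ∈ Set.Ioi (0:ℝ), (deriv u1 r)^2 + (deriv u2 r)^2
      ≤ B^2 * ((deriv u1 r)^2 + (deriv u2 r)^2 - (deriv u3 r)^2) := by
    intro r hr
    have hc' := hCS r hr
    have h2 := hcon r hr
    have h3 := hsup' r hr
    have h4 := hu3ge1 r hr
    have h5 := hzD r hr
    have h6 : (u3 r) * (u3 r) ≤ B * B := mul_self_le_mul_self (by linarith) h3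
    nlinarith [mul_nonneg (show (0:ℝ) ≤ B*B - u3 r * u3 r by linarith)
      (show (0:ℝ) ≤ (deriv u1 r)^2 + (deriv u2 r)^2 - (deriv u3 r)^2 by linarith)]
  have hm2' : (0:ℝ) ≤ (m:ℝ)^2 := by positivity
  have hb1 : ∀ r ∈ Set.Ioi (0:ℝ),
      (deriv u1 r)^2 * r + (m:ℝ)^2*((u1 r / r)^2 * r) ≤ K * EI r := by
    intro r hr
    have hr' : (0:ℝ) < r := hr
    have hr0 : r ≠ 0 := ne_of_gt hr'
    have hq : (u1 r / r)^2 * r = (u1 r)^2 / r := by field_simp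
    rw [hq, ← mul_le_mul_iff_of_pos_right hr']
    have hexp : ((deriv u1 r)^2 * r + (m:ℝ)^2*((u1 r)^2 / r)) * r
        = (deriv u1 r)^2*r^2 + (m:ℝ)^2*(u1 r)^2 := by field_simp
    rw [hexp, mul_assoc, hEIr r hr]
    have e1 : (deriv u1 r)^2 * r^2
        ≤ (B^2 * ((deriv u1 r)^2 + (deriv u2 r)^2 - (deriv u3 r)^2)) * r^2 :=
      mul_le_mul_of_nonneg_right (by nlinarith [hDle r hr, sq_nonneg (deriv u2 r)])
        (sq_nonneg r)
    have e3 : (0:ℝ) ≤ (deriv u1 r)^2 + (deriv u2 r)^2 - (deriv u3 r)^2 := by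
      linarith [hzD r hr]
    have e5 : B^2 * (((deriv u1 r)^2 + (deriv u2 r)^2 - (deriv u3 r)^2) * r^2)
        ≤ K * (((deriv u1 r)^2 + (deriv u2 r)^2 - (deriv u3 r)^2) * r^2) :=
      mul_le_mul_of_nonneg_right hKB (mul_nonneg e3 (sq_nonneg r))
    have e6 : (m:ℝ)^2*(u1 r)^2 ≤ K * ((m:ℝ)^2 * ((u1 r)^2 + (u2 r)^2)) := by
      nlinarith [mul_le_mul_of_nonneg_left hK1 (mul_nonneg hm2' (sq_nonneg (u1 r))),
        mul_nonneg hm2' (sq_nonneg (u2 r))]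
    linarith [e1, e5, e6]
  have hb2 : ∀ r ∈ Set.Ioi (0:ℝ),
      (deriv u2 r)^2 * r + (m:ℝ)^2*((u2 r / r)^2 * r) ≤ K * EI r := by
    intro r hr
    have hr' : (0:ℝ) < r := hr
    have hr0 : r ≠ 0 := ne_of_gt hr'
    have hq : (u2 r / r)^2 * r = (u2 r)^2 / r := by field_simp
    rw [hq, ← mul_le_mul_iff_of_pos_right hr']
    have hexp : ((deriv u2 r)^2 * r + (m:ℝ)^2*((u2 r)^2 / r)) * r
        = (deriv u2 r)^2*r^2 + (m:ℝ)^2*(u2 r)^2 := by field_simp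
    rw [hexp, mul_assoc, hEIr r hr]
    have e1 : (deriv u2 r)^2 * r^2
        ≤ (B^2 * ((deriv u1 r)^2 + (deriv u2 r)^2 - (deriv u3 r)^2)) * r^2 :=
      mul_le_mul_of_nonneg_right (by nlinarith [hDle r hr, sq_nonneg (deriv u1 r)])
        (sq_nonneg r)
    have e3 : (0:ℝ) ≤ (deriv u1 r)^2 + (deriv u2 r)^2 - (deriv u3 r)^2 := by
      linarith [hzD r hr]
    have e5 : B^2 * (((deriv u1 r)^2 + (deriv u2 r)^2 - (deriv u3 r)^2) * r^2)
        ≤ K * (((deriv u1 r)^2 + (deriv u2 r)^2 - (deriv u3 r)^2) * r^2) :=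
      mul_le_mul_of_nonneg_right hKB (mul_nonneg e3 (sq_nonneg r))
    have e6 : (m:ℝ)^2*(u2 r)^2 ≤ K * ((m:ℝ)^2 * ((u1 r)^2 + (u2 r)^2)) := by
      nlinarith [mul_le_mul_of_nonneg_left hK1 (mul_nonneg hm2' (sq_nonneg (u2 r))),
        mul_nonneg hm2' (sq_nonneg (u1 r))]
    linarith [e1, e5, e6]
  have hb3 : ∀ r ∈ Set.Ioi (0:ℝ),
      (deriv u3 r)^2 * r + (m:ℝ)^2*(((u3 r - 1) / r)^2 * r) ≤ K * EI r := by
    intro r hr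
    have hr' : (0:ℝ) < r := hr
    have hr0 : r ≠ 0 := ne_of_gt hr'
    have hq : ((u3 r - 1) / r)^2 * r = (u3 r - 1)^2 / r := by field_simp
    rw [hq, ← mul_le_mul_iff_of_pos_right hr']
    have hexp : ((deriv u3 r)^2 * r + (m:ℝ)^2*((u3 r - 1)^2 / r)) * r
        = (deriv u3 r)^2*r^2 + (m:ℝ)^2*(u3 r - 1)^2 := by field_simp
    rw [hexp, mul_assoc, hEIr r hr]
    have e1 : (deriv u3 r)^2 * r^2
        ≤ (B^2 * ((deriv u1 r)^2 + (deriv u2 r)^2 - (deriv u3 r)^2)) * r^2 :=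
      mul_le_mul_of_nonneg_right (by nlinarith [hDle r hr, hzD r hr]) (sq_nonneg r)
    have e3 : (0:ℝ) ≤ (deriv u1 r)^2 + (deriv u2 r)^2 - (deriv u3 r)^2 := by
      linarith [hzD r hr]
    have e5 : B^2 * (((deriv u1 r)^2 + (deriv u2 r)^2 - (deriv u3 r)^2) * r^2)
        ≤ K * (((deriv u1 r)^2 + (deriv u2 r)^2 - (deriv u3 r)^2) * r^2) :=
      mul_le_mul_of_nonneg_right hKB (mul_nonneg e3 (sq_nonneg r))
    -- (u3 - 1)^2 ≤ (B-1)/2 * (u1^2 + u2^2), and (B-1)/2 ≤ B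
    have h2 := hcon r hr
    have h3 := hsup' r hr
    have h4 := hu3ge1 r hr
    have hv2 : 2*(u3 r - 1) ≤ (u1 r)^2 + (u2 r)^2 := by nlinarith
    have hv : (u3 r - 1)^2 ≤ (B-1)/2 * ((u1 r)^2 + (u2 r)^2) := by nlinarith
    have e6 : (m:ℝ)^2*(u3 r - 1)^2 ≤ K * ((m:ℝ)^2 * ((u1 r)^2 + (u2 r)^2)) := by
      have hBK : (B-1)/2 ≤ K := by nlinarith
      have t1 : (m:ℝ)^2*(u3 r - 1)^2 ≤ (m:ℝ)^2*((B-1)/2 * ((u1 r)^2 + (u2 r)^2)) :=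
        mul_le_mul_of_nonneg_left hv hm2'
      have t2 : (B-1)/2 * ((m:ℝ)^2 * ((u1 r)^2 + (u2 r)^2))
          ≤ K * ((m:ℝ)^2 * ((u1 r)^2 + (u2 r)^2)) :=
        mul_le_mul_of_nonneg_right hBK (by positivity)
      linarith [t1, t2]
    linarith [e1, e5, e6]
  -- apply the L² bounds
  have hs1 := sum_bound m u1 EI K (measurable_deriv u1) hint hb1
  have hs2 := sum_bound m u2 EI K (measurable_deriv u2) hint hb2
  rw [hIdef] at hs1 hs2
  have hdv : deriv (fun r => u3 r - 1) = deriv u3 := funext fun x => deriv_sub_const 1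
  have hb3' : ∀ r ∈ Set.Ioi (0:ℝ),
      (deriv (fun r => u3 r - 1) r)^2 * r
        + (m:ℝ)^2*(((fun r => u3 r - 1) r / r)^2 * r) ≤ K * EI r := by
    intro r hr
    rw [hdv]
    exact hb3 r hr
  have hs3 := sum_bound m (fun r => u3 r - 1) EI K
    (by rw [hdv]; exact measurable_deriv u3) hint hb3'
  rw [hIdef] at hs3
  have hKI0 : (0:ℝ) ≤ K * I := mul_nonneg hK0 hI0
  have f1 := lt_top_parts m hm hs1
  have f2 := lt_top_parts m hm hs2
  have f3 := lt_top_parts m hm hs3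
  have hac : rdr ≪ volume.restrict (Set.Ioi 0) := withDensity_absolutelyContinuous _ _
  have mem1 : memHe u1 := by
    refine ⟨⟨(measurable_deriv u1).aestronglyMeasurable, f1.1⟩, ⟨?_, f1.2⟩⟩
    exact ((hu1.continuousOn.div continuousOn_id fun x hx => ne_of_gt hx).aestronglyMeasurable
      measurableSet_Ioi).mono_ac hac
  have mem2 : memHe u2 := by
    refine ⟨⟨(measurable_deriv u2).aestronglyMeasurable, f2.1⟩, ⟨?_, f2.2⟩⟩
    exact ((hu2.continuousOn.div continuousOn_id fun x hx => ne_of_gt hx).aestronglyMeasurable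
      measurableSet_Ioi).mono_ac hac
  have mem3 : memHe (fun r => u3 r - 1) := by
    refine ⟨⟨?_, f3.1⟩, ⟨?_, f3.2⟩⟩
    · rw [hdv]
      exact (measurable_deriv u3).aestronglyMeasurable
    · exact (((hu3.continuousOn.sub continuousOn_const).div continuousOn_id
        fun x hx => ne_of_gt hx).aestronglyMeasurable measurableSet_Ioi).mono_ac hac
  refine ⟨mem1, mem2, mem3, ?_⟩
  have hn1 : HeNorm m u1 ≤ ENNReal.ofReal (Real.sqrt (K*I)) := henorm_aux m u1 hKI0 hs1
  have hn2 : HeNorm m u2 ≤ ENNReal.ofReal (Real.sqrt (K*I)) := henorm_aux m u2 hKI0 hs2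
  have hn3 : HeNorm m (fun r => u3 r - 1) ≤ ENNReal.ofReal (Real.sqrt (K*I)) :=
    henorm_aux m _ hKI0 hs3
  have hEval : energy m u1 u2 u3 = Real.pi * I := by rw [energy, hEIdef, hIdef]
  have hpi : (1:ℝ) ≤ Real.pi := by linarith [Real.pi_gt_three]
  have hsq0 : (0:ℝ) ≤ Real.sqrt (K*I) := Real.sqrt_nonneg _
  have hreal : Real.sqrt (K*I) + Real.sqrt (K*I) + Real.sqrt (K*I)
      ≤ 6 * Real.sqrt (Real.pi * I) * ((m:ℝ) + Real.pi * I) := by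
    have hKI : Real.sqrt (K*I) = Real.sqrt K * Real.sqrt I := Real.sqrt_mul hK0 I
    have h1 : Real.sqrt K ≤ B + 1 := by
      have hKB1 : K ≤ (B+1)^2 := by nlinarith
      calc Real.sqrt K ≤ Real.sqrt ((B+1)^2) := Real.sqrt_le_sqrt hKB1
        _ = B+1 := Real.sqrt_sq (by linarith)
    have hIpi : I ≤ Real.pi * I := le_mul_of_one_le_left hI0 hpi
    have h2 : B + 1 ≤ 2*((m:ℝ) + Real.pi * I) := by
      have hd : I/(2*(m:ℝ)) ≤ I := div_le_self hI0 (by linarith)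
      rw [hBdef]
      linarith
    have h3 : Real.sqrt I ≤ Real.sqrt (Real.pi * I) := Real.sqrt_le_sqrt hIpi
    have h4 : (0:ℝ) ≤ Real.sqrt I := Real.sqrt_nonneg I
    have h5 : Real.sqrt K * Real.sqrt I
        ≤ (2*((m:ℝ) + Real.pi * I)) * Real.sqrt (Real.pi * I) :=
      mul_le_mul (h1.trans h2) h3 h4 (by positivity)
    rw [hKI]
    linarith [h5]
  calc HeNorm m u1 + HeNorm m u2 + HeNorm m (fun r => u3 r - 1)
      ≤ ENNReal.ofReal (Real.sqrt (K*I)) + ENNReal.ofReal (Real.sqrt (K*I))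
        + ENNReal.ofReal (Real.sqrt (K*I)) := add_le_add (add_le_add hn1 hn2) hn3
    _ = ENNReal.ofReal (Real.sqrt (K*I) + Real.sqrt (K*I) + Real.sqrt (K*I)) := by
        rw [← ENNReal.ofReal_add hsq0 hsq0, ← ENNReal.ofReal_add (by linarith) hsq0]
    _ ≤ ENNReal.ofReal (6 * Real.sqrt (energy m u1 u2 u3) * ((m:ℝ) + energy m u1 u2 u3)) := by
        apply ENNReal.ofReal_le_ofReal
        rw [hEval]
        exact hreal
end
end

section
/- Let m > 0 be real, r > 0, and let ψ₁, ψ₂ ∈ ℂ and a ∈ ℝ satisfy a² ≤ |ψ₁|²|ψ₂|². Set A₂ := √(m² + |ψ₂|²) and define G := −( a/(A₂ + m) )² + ( A₂/(A₂ + m) ) ( |ψ₁|² + |ψ₂|²/r² ). Then G ≥ ( m/(A₂ + m) ) |ψ₁|² + (1/2) |ψ₂|²/r². In particular G ≥ 0, and if in addition A₂ ≤ m + m₀ for some m₀ ≥ 0, then G ≥ ( m/(2m + m₀) ) |ψ₁|² + (1/2) |ψ₂|²/r². -/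
/-- Pointwise coercivity of the quantity `G` appearing in the localized virial identity for
equivariant Schrödinger maps into `ℍ²`. -/
theorem stmt19 (m : ℝ) (hm : 0 < m) (r : ℝ) (hr : 0 < r) (ψ₁ ψ₂ : ℂ) (a : ℝ)
    (ha : a^2 ≤ ‖ψ₁‖^2 * ‖ψ₂‖^2)
    (A₂ : ℝ) (hA : A₂ = Real.sqrt (m^2 + ‖ψ₂‖^2))
    (G : ℝ)
    (hG : G = -(a / (A₂ + m))^2
      + (A₂ / (A₂ + m)) * (‖ψ₁‖^2 + ‖ψ₂‖^2 / r^2)) :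
    (m / (A₂ + m)) * ‖ψ₁‖^2 + (1/2) * (‖ψ₂‖^2 / r^2) ≤ G ∧
    0 ≤ G ∧
    ∀ m₀ : ℝ, 0 ≤ m₀ → A₂ ≤ m + m₀ →
      (m / (2*m + m₀)) * ‖ψ₁‖^2 + (1/2) * (‖ψ₂‖^2 / r^2) ≤ G := by
  set s := ‖ψ₁‖^2 with hs
  set t := ‖ψ₂‖^2 with ht
  have hs0 : 0 ≤ s := sq_nonneg _
  have ht0 : 0 ≤ t := sq_nonneg _
  have hA2 : A₂^2 = m^2 + t := by
    rw [hA]; exact Real.sq_sqrt (by positivity)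
  have hA0 : 0 ≤ A₂ := hA ▸ Real.sqrt_nonneg _
  have hAm : m ≤ A₂ := by nlinarith
  have hd : 0 < A₂ + m := by linarith
  have key : (m / (A₂ + m)) * s + (1/2) * (t / r^2) ≤ G := by
    rw [hG, div_pow, ← sub_nonneg]
    have hr2 : (0:ℝ) < r^2 := by positivity
    have hta : t = (A₂ - m) * (A₂ + m) := by nlinarith
    have ha' : a^2 ≤ s * ((A₂ - m) * (A₂ + m)) := by rw [← hta]; exact ha
    have hexp : -(a ^ 2 / (A₂ + m) ^ 2) + A₂ / (A₂ + m) * (s + t / r ^ 2)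
        - (m / (A₂ + m) * s + 1 / 2 * (t / r ^ 2))
        = (-(a^2) * r^2 + A₂ * (A₂+m) * (s * r^2 + t)
          - (m * (A₂+m) * s * r^2 + t * (A₂+m)^2 / 2)) / ((A₂+m)^2 * r^2) := by
      field_simp
    rw [hexp]
    apply div_nonneg _ (by positivity)
    nlinarith [mul_nonneg (mul_nonneg ht0 hd.le) (sub_nonneg.mpr hAm),
      mul_le_mul_of_nonneg_right ha' hr2.le]
  refine ⟨key, ?_, ?_⟩
  · have : 0 ≤ (m / (A₂ + m)) * s + (1/2) * (t / r^2) := by positivity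
    linarith
  · intro m₀ hm₀ hAle
    have h1 : m / (2*m + m₀) ≤ m / (A₂ + m) :=
      div_le_div_of_nonneg_left hm.le hd (by linarith)
    have := mul_le_mul_of_nonneg_right h1 hs0
    linarith
end
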